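/- arXiv:1810.06256 — 4 statements merged into one kernel-verified Lean document; each statement's English description precedes it below -/
import Mathlib

section
/- Let F : ℝ^n → ℝ^n be a quadratic map (components are quadratic polynomials) and let V ⊆ ℝ^n be a convex set such that the Jacobian of F is invertible at every point of V. Then F is injective on V. -/
/-!
For a quadratic map the midpoint rule is exact: `F x - F y = DF (midpoint x y) (x - y)`.
If `F x = F y` with `x, y ∈ V`, the midpoint lies in `V` by convexity, so the injectivity of `DF`
there forces `x - y = 0`.
-/

variable {𝕜 E F : Type*}

section Algebra

variable [CommRing 𝕜] [Invertible (2 : 𝕜)]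
  [AddCommGroup E] [Module 𝕜 E] [AddCommGroup F] [Module 𝕜 F]

theorem LinearMap.bilinear_diag_sub_eq_midpoint (Q : E →ₗ[𝕜] E →ₗ[𝕜] F) (x y : E) :
    Q x x - Q y y = (Q (midpoint 𝕜 x y) + Q.flip (midpoint 𝕜 x y)) (x - y) := by
  simp only [midpoint_eq_smul_add, LinearMap.add_apply, LinearMap.flip_apply, map_smul,
    LinearMap.smul_apply, map_add, map_sub]
  linear_combination (norm := module) (invOf_mul_self (2 : 𝕜)) • (Q y y - Q x x)

end Algebra

section Calculus

variable [NontriviallyNormedField 𝕜] [CompleteSpace 𝕜]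
  [NormedAddCommGroup E] [NormedSpace 𝕜 E] [FiniteDimensional 𝕜 E]
  [NormedAddCommGroup F] [NormedSpace 𝕜 F]

theorem LinearMap.hasFDerivAt_bilinear_diag (Q : E →ₗ[𝕜] E →ₗ[𝕜] F) (v : E) :
    HasFDerivAt (fun x ↦ Q x x) (Q v + Q.flip v).toContinuousLinearMap v := by
  let B : E →L[𝕜] E →L[𝕜] F :=
    (LinearMap.toContinuousLinearMap.toLinearMap ∘ₗ Q).toContinuousLinearMap
  convert B.hasFDerivAt.clm_apply (hasFDerivAt_id v) using 1 <;> ext <;> simp [B]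

theorem LinearMap.hasFDerivAt_quadratic (Q : E →ₗ[𝕜] E →ₗ[𝕜] F) (L : E →ₗ[𝕜] F) (c : F) (v : E) :
    HasFDerivAt (fun x ↦ Q x x + L x + c) (Q v + Q.flip v + L).toContinuousLinearMap v := by
  rw [map_add]
  exact ((Q.hasFDerivAt_bilinear_diag v).add L.toContinuousLinearMap.hasFDerivAt).add_const c

theorem LinearMap.quadratic_sub_eq_fderiv_midpoint [Invertible (2 : 𝕜)]
    (Q : E →ₗ[𝕜] E →ₗ[𝕜] F) (L : E →ₗ[𝕜] F) (c : F) (x y : E) :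
    (Q x x + L x + c) - (Q y y + L y + c) =
      fderiv 𝕜 (fun x ↦ Q x x + L x + c) (midpoint 𝕜 x y) (x - y) := by
  rw [(Q.hasFDerivAt_quadratic L c _).fderiv, LinearMap.coe_toContinuousLinearMap',
    LinearMap.add_apply, ← Q.bilinear_diag_sub_eq_midpoint, map_sub]
  abel

end Calculus

theorem quadratic_injOn_convex_nonsingular_general
    {n : ℕ} (Q : (Fin n → ℝ) →ₗ[ℝ] (Fin n → ℝ) →ₗ[ℝ] (Fin n → ℝ))
    (L : (Fin n → ℝ) →ₗ[ℝ] (Fin n → ℝ)) (c : Fin n → ℝ)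
    (F : (Fin n → ℝ) → (Fin n → ℝ))
    (hF : ∀ x, F x = Q x x + L x + c)
    (V : Set (Fin n → ℝ)) (hV : Convex ℝ V)
    (hJ : ∀ v ∈ V, Function.Bijective (fderiv ℝ F v)) :
    Set.InjOn F V := by
  intro x hx y hy hxy
  have hF_sub : F x - F y = fderiv ℝ F (midpoint ℝ x y) (x - y) := by
    simpa only [hF, ← funext hF] using Q.quadratic_sub_eq_fderiv_midpoint L c x y
  have hmid : fderiv ℝ F (midpoint ℝ x y) (x - y) = fderiv ℝ F (midpoint ℝ x y) 0 := by
    rw [← hF_sub, hxy, sub_self, map_zero]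
  exact sub_eq_zero.mp ((hJ _ (hV.midpoint_mem hx hy)).injective hmid)

/-- A quadratic map is injective on a convex set on which its Jacobian is
everywhere invertible. -/
theorem quadratic_injOn_convex_nonsingular
    {n : ℕ} (Q : (Fin n → ℝ) →ₗ[ℝ] (Fin n → ℝ) →ₗ[ℝ] (Fin n → ℝ))
    (hQ : ∀ x y, Q x y = Q y x)
    (L : (Fin n → ℝ) →ₗ[ℝ] (Fin n → ℝ)) (c : Fin n → ℝ)
    (F : (Fin n → ℝ) → (Fin n → ℝ))
    (hF : ∀ x, F x = Q x x + L x + c)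
    (V : Set (Fin n → ℝ)) (hV : Convex ℝ V)
    (hJ : ∀ v ∈ V, Function.Bijective (fderiv ℝ F v)) :
    Set.InjOn F V :=
  quadratic_injOn_convex_nonsingular_general Q L c F hF V hV hJ
end

section
/- Let F : ℝ^n → ℝ^n be continuously differentiable, V ⊆ ℝ^n bounded, open, and with DF invertible at every point of V, and let S ⊆ ℝ^n be a connected set such that F(V) ∩ S is nonempty and F(∂V) ∩ S is empty. Then S ⊆ F(V), i.e., every s ∈ S has a preimage in V. -/
/-!
Since `DF` is invertible on the open set `V`, the inverse function theorem makes `F(V)` open,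
while `F(closure V)` is compact, hence closed. As `closure V = V ∪ ∂V` and `F(∂V)` misses `S`,
the open sets `F(V)` and `F(closure V)ᶜ` are disjoint and cover `S`; connectedness of `S` and
`F(V) ∩ S ≠ ∅` then force `S ⊆ F(V)`.
-/

open Set

theorem IsOpen.image_of_hasStrictFDerivAt_equiv {𝕜 : Type*} [NontriviallyNormedField 𝕜]
    {E : Type*} [NormedAddCommGroup E] [NormedSpace 𝕜 E] [CompleteSpace E]
    {F : Type*} [NormedAddCommGroup F] [NormedSpace 𝕜 F] {f : E → F}
    {f' : E → E ≃L[𝕜] F} {V : Set E}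
    (hV : IsOpen V) (hf : ∀ x ∈ V, HasStrictFDerivAt f (f' x : E →L[𝕜] F) x) :
    IsOpen (f '' V) := by
  rw [isOpen_iff_mem_nhds]
  rintro _ ⟨x, hx, rfl⟩
  rw [← (hf x hx).map_nhds_eq_of_equiv]
  exact Filter.image_mem_map (hV.mem_nhds hx)

theorem ContDiffAt.exists_hasStrictFDerivAt_equiv_of_bijective {𝕜 : Type*} [RCLike 𝕜]
    {E : Type*} [NormedAddCommGroup E] [NormedSpace 𝕜 E] [FiniteDimensional 𝕜 E]
    {F : Type*} [NormedAddCommGroup F] [NormedSpace 𝕜 F]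
    {f : E → F} {x : E} (hf : ContDiffAt 𝕜 1 f x) (hbij : Function.Bijective (fderiv 𝕜 f x)) :
    ∃ e : E ≃L[𝕜] F, HasStrictFDerivAt f (e : E →L[𝕜] F) x :=
  ⟨(LinearEquiv.ofBijective (fderiv 𝕜 f x : E →ₗ[𝕜] F) hbij).toContinuousLinearEquiv,
    hf.hasStrictFDerivAt one_ne_zero⟩

theorem IsPreconnected.subset_image_of_disjoint_image_frontier {X Y : Type*}
    [TopologicalSpace X] [TopologicalSpace Y] [T2Space Y] {f : X → Y} {V : Set X} {S : Set Y}
    (hf : ContinuousOn f (closure V)) (hV : IsCompact (closure V)) (hfV : IsOpen (f '' V))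
    (hS : IsPreconnected S) (hne : (f '' V ∩ S).Nonempty)
    (hfr : Disjoint (f '' frontier V) S) :
    S ⊆ f '' V := by
  have hdisj : Disjoint (f '' V) (f '' closure V)ᶜ :=
    disjoint_compl_right_iff_subset.2 (image_mono subset_closure)
  have hcover : S ⊆ f '' V ∪ (f '' closure V)ᶜ := by
    intro s hs
    by_cases h : s ∈ f '' closure V
    · obtain ⟨x, hx, rfl⟩ := h
      rw [closure_eq_self_union_frontier] at hx
      rcases hx with hx | hx
      · exact Or.inl (mem_image_of_mem f hx)
      · exact absurd hs (hfr.notMem_of_mem_left (mem_image_of_mem f hx))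
    · exact Or.inr h
  exact hS.subset_left_of_subset_union hfV (hV.image_of_continuousOn hf).isClosed.isOpen_compl
    hdisj hcover (inter_comm _ _ ▸ hne)

/-- Existence of preimages: if `V` is bounded open with invertible derivative of
the `C¹` map `F` everywhere on `V`, `S` is connected, `F(V) ∩ S ≠ ∅`, and
`F(∂V) ∩ S = ∅`, then `S ⊆ F(V)`. -/
theorem exists_preimage_of_connected
    {n : ℕ} (F : (Fin n → ℝ) → (Fin n → ℝ)) (hF : ContDiff ℝ 1 F)
    (V : Set (Fin n → ℝ)) (hVb : Bornology.IsBounded V) (hVo : IsOpen V)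
    (hJ : ∀ v ∈ V, Function.Bijective (fderiv ℝ F v))
    (S : Set (Fin n → ℝ)) (hS : IsPreconnected S)
    (hne : (F '' V ∩ S).Nonempty)
    (hfr : F '' (frontier V) ∩ S = ∅) :
    S ⊆ F '' V := by
  choose! e he using fun v hv ↦
    hF.contDiffAt.exists_hasStrictFDerivAt_equiv_of_bijective (hJ v hv)
  exact hS.subset_image_of_disjoint_image_frontier hF.continuous.continuousOn
    hVb.isCompact_closure (hVo.image_of_hasStrictFDerivAt_equiv he) hne
    (disjoint_iff_inter_eq_empty.2 hfr)
end

section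
/- Let F : ℝ^n → ℝ^n be a quadratic map with F(x) = Q(x,x) + L(x) + c (Q symmetric bilinear, L linear). Suppose V ⊆ ℝ^n is convex and DF(v) is invertible for all v ∈ V, and S ⊆ ℝ^n. Then for each s ∈ S there is at most one v ∈ V with F(v) = s. -/
/-- Uniqueness of solutions in a convex non-singular set for a quadratic map:
each `s ∈ S` has at most one preimage in `V`. The Jacobian of `F` at `v` is the
linear map `h ↦ 2 • Q v h + L h`. -/
theorem at_most_one_preimage_quadratic
    {n : ℕ} (Q : (Fin n → ℝ) →ₗ[ℝ] (Fin n → ℝ) →ₗ[ℝ] (Fin n → ℝ))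
    (hQ : ∀ x y, Q x y = Q y x)
    (L : (Fin n → ℝ) →ₗ[ℝ] (Fin n → ℝ)) (c : Fin n → ℝ)
    (F : (Fin n → ℝ) → (Fin n → ℝ))
    (hF : ∀ x, F x = Q x x + L x + c)
    (V : Set (Fin n → ℝ)) (hV : Convex ℝ V)
    (hJ : ∀ v ∈ V, Function.Bijective (fun h => (2 : ℝ) • Q v h + L h))
    (S : Set (Fin n → ℝ)) :
    ∀ s ∈ S, ∀ v₁ ∈ V, ∀ v₂ ∈ V, F v₁ = s → F v₂ = s → v₁ = v₂ := by
  intro s _ v₁ hv₁ v₂ hv₂ h1 h2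
  set m : Fin n → ℝ := (1/2 : ℝ) • v₁ + (1/2 : ℝ) • v₂ with hm
  have hmV : m ∈ V := hV hv₁ hv₂ (by norm_num) (by norm_num) (by norm_num)
  have hinj := (hJ m hmV).injective
  have key : (2 : ℝ) • Q m (v₁ - v₂) + L (v₁ - v₂) =
      (2 : ℝ) • Q m 0 + L 0 := by
    have hFe : F v₁ - F v₂ = 0 := by rw [h1, h2, sub_self]
    rw [hF, hF] at hFe
    simp only [hm, map_add, map_smul, map_sub, LinearMap.add_apply,
      LinearMap.smul_apply, LinearMap.sub_apply, LinearMap.map_sub, map_zero,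
      smul_zero, add_zero]
    have hsym : Q v₂ v₁ = Q v₁ v₂ := hQ v₂ v₁
    linear_combination (norm := module) hFe + hsym
  have := hinj key
  have hd : v₁ - v₂ = 0 := this
  exact sub_eq_zero.mp hd
end

section
/- Let F : ℝ^n → ℝ^n be continuously differentiable and quadratic (F(x) = Q(x,x) + L(x) + c with Q symmetric bilinear, L linear), let V ⊆ ℝ^n be bounded, open, convex, with DF invertible everywhere on V, and let S ⊆ ℝ^n be connected with F(V) ∩ S nonempty and F(∂V) ∩ S empty. Then for every s ∈ S there exists a unique v ∈ V with F(v) = s. -/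
/-!
Existence is topological: `F(V)` is open by the inverse function theorem, and the limit
points of `F(V)` lie in the compact set `F(V̄) = F(V) ∪ F(∂V)`, so inside `S` they lie in
`F(V)`; a preconnected set meeting `F(V)` is therefore contained in it. Uniqueness is algebraic: for a quadratic map the
secant `F b - F a` equals the derivative at the midpoint applied to `b - a`, and the midpoint
stays in the convex set `V`, where the derivative is injective.
-/

open Function Set

section Quadratic

variable {E G : Type*} [NormedAddCommGroup E] [NormedSpace ℝ E]
  [NormedAddCommGroup G] [NormedSpace ℝ G]

theorem hasStrictFDerivAt_quadratic [FiniteDimensional ℝ E] (Q : E →ₗ[ℝ] E →ₗ[ℝ] G)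
    (L : E →ₗ[ℝ] G) (c : G) (x : E) :
    HasStrictFDerivAt (fun y => Q y y + L y + c)
      (LinearMap.toContinuousLinearMap (Q x + Q.flip x + L)) x := by
  let B : E →L[ℝ] E →L[ℝ] G :=
    LinearMap.toContinuousLinearMap (LinearMap.toContinuousLinearMap.toLinearMap ∘ₗ Q)
  have hB : HasStrictFDerivAt (fun y => B y y) _ x :=
    B.hasStrictFDerivAt_of_bilinear (hasStrictFDerivAt_id x) (hasStrictFDerivAt_id x)
  have hL := (LinearMap.toContinuousLinearMap L).hasStrictFDerivAt (x := x)
  convert (hB.add hL).add_const c using 1 <;> ext <;> simp [B, add_comm]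

theorem quadratic_sub_quadratic_eq_apply_midpoint (Q : E →ₗ[ℝ] E →ₗ[ℝ] G) (L : E →ₗ[ℝ] G)
    (c : G) (a b : E) :
    (Q b b + L b + c) - (Q a a + L a + c) =
      (Q (midpoint ℝ a b) + Q.flip (midpoint ℝ a b) + L) (b - a) := by
  simp only [midpoint_eq_smul_add, invOf_eq_inv, LinearMap.add_apply, LinearMap.flip_apply,
    map_add, map_sub, map_smul, LinearMap.smul_apply, LinearMap.add_apply]
  module

theorem Convex.injOn_quadratic {V : Set E} (hV : Convex ℝ V) (Q : E →ₗ[ℝ] E →ₗ[ℝ] G)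
    (L : E →ₗ[ℝ] G) (c : G) (hinj : ∀ m ∈ V, Injective (Q m + Q.flip m + L)) :
    InjOn (fun y => Q y y + L y + c) V := by
  intro a ha b hb (hab : Q a a + L a + c = Q b b + L b + c)
  have hsecant := quadratic_sub_quadratic_eq_apply_midpoint Q L c a b
  rw [← hab, sub_self, eq_comm, ← map_zero (Q _ + Q.flip _ + L)] at hsecant
  exact (sub_eq_zero.1 (hinj _ (hV.midpoint_mem ha hb) hsecant)).symm

end Quadratic

theorem isOpen_image_of_hasStrictFDerivAt_bijective {𝕜 E G : Type*} [NontriviallyNormedField 𝕜]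
    [NormedAddCommGroup E] [NormedSpace 𝕜 E] [CompleteSpace E]
    [NormedAddCommGroup G] [NormedSpace 𝕜 G] [CompleteSpace G] {f : E → G} {f' : E → E →L[𝕜] G} {V : Set E}
    (hV : IsOpen V) (hf : ∀ x ∈ V, HasStrictFDerivAt f (f' x) x)
    (hbij : ∀ x ∈ V, Bijective (f' x)) : IsOpen (f '' V) := by
  rw [isOpen_iff_mem_nhds]
  rintro _ ⟨x, hx, rfl⟩
  let e := ContinuousLinearEquiv.ofBijective (f' x) (LinearMap.ker_eq_bot.2 (hbij x hx).1)
    (LinearMap.range_eq_top.2 (hbij x hx).2)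
  have he : HasStrictFDerivAt f (e : E →L[𝕜] G) x := hf x hx
  rw [← he.map_nhds_eq_of_equiv]
  exact Filter.image_mem_map (hV.mem_nhds hx)

theorem Bornology.IsBounded.closure_image_subset_image_union_image_frontier {X Y : Type*}
    [PseudoMetricSpace X] [ProperSpace X] [TopologicalSpace Y] [T2Space Y] {f : X → Y}
    {V : Set X} (hV : Bornology.IsBounded V) (hf : Continuous f) :
    closure (f '' V) ⊆ f '' V ∪ f '' frontier V :=
  calc closure (f '' V) ⊆ f '' closure V :=
        closure_minimal (image_mono subset_closure) (hV.isCompact_closure.image hf).isClosed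
    _ = f '' V ∪ f '' frontier V := by rw [closure_eq_self_union_frontier, image_union]

theorem existsUnique_preimage_quadratic_general
    {n : ℕ} (Q : (Fin n → ℝ) →ₗ[ℝ] (Fin n → ℝ) →ₗ[ℝ] (Fin n → ℝ))
    (L : (Fin n → ℝ) →ₗ[ℝ] (Fin n → ℝ)) (c : Fin n → ℝ)
    (F : (Fin n → ℝ) → (Fin n → ℝ))
    (hF : ∀ x, F x = Q x x + L x + c)
    (V : Set (Fin n → ℝ)) (hVb : Bornology.IsBounded V) (hVo : IsOpen V)
    (hVc : Convex ℝ V)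
    (hJ : ∀ v ∈ V, Function.Bijective (fderiv ℝ F v))
    (S : Set (Fin n → ℝ)) (hS : IsPreconnected S)
    (hne : (F '' V ∩ S).Nonempty)
    (hfr : F '' (frontier V) ∩ S = ∅) :
    ∀ s ∈ S, ∃! v, v ∈ V ∧ F v = s := by
  obtain rfl : F = fun x => Q x x + L x + c := funext hF
  have hderiv := hasStrictFDerivAt_quadratic Q L c
  have hbij : ∀ v ∈ V, Bijective (Q v + Q.flip v + L) := fun v hv => by
    simpa only [(hderiv v).hasFDerivAt.fderiv, LinearMap.coe_toContinuousLinearMap'] using hJ v hv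
  have hopen := isOpen_image_of_hasStrictFDerivAt_bijective hVo (fun v _ => hderiv v) hbij
  have hcont : Continuous fun x => Q x x + L x + c :=
    continuous_iff_continuousAt.2 fun x => (hderiv x).continuousAt
  have hcover : S ⊆ _ '' V := hS.subset_of_closure_inter_subset hopen (by rwa [inter_comm])
    fun y ⟨hy, hyS⟩ => (hVb.closure_image_subset_image_union_image_frontier hcont hy).resolve_right
      fun hyF => hfr.subset ⟨hyF, hyS⟩
  intro s hs
  obtain ⟨v, hv, rfl⟩ := hcover hs
  exact ⟨v, ⟨hv, rfl⟩, fun w hw => hVc.injOn_quadratic Q L c (fun m hm => (hbij m hm).1) hw.1 hv hw.2⟩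

/-- Existence and uniqueness of load-flow solutions: for a `C¹` quadratic map `F`
with `V` bounded, open, convex and non-singular, and `S` connected with
`F(V) ∩ S ≠ ∅` and `F(∂V) ∩ S = ∅`, every `s ∈ S` has a unique preimage in `V`. -/
theorem existsUnique_preimage_quadratic
    {n : ℕ} (Q : (Fin n → ℝ) →ₗ[ℝ] (Fin n → ℝ) →ₗ[ℝ] (Fin n → ℝ))
    (hQ : ∀ x y, Q x y = Q y x)
    (L : (Fin n → ℝ) →ₗ[ℝ] (Fin n → ℝ)) (c : Fin n → ℝ)
    (F : (Fin n → ℝ) → (Fin n → ℝ)) (hFc : ContDiff ℝ 1 F)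
    (hF : ∀ x, F x = Q x x + L x + c)
    (V : Set (Fin n → ℝ)) (hVb : Bornology.IsBounded V) (hVo : IsOpen V)
    (hVc : Convex ℝ V)
    (hJ : ∀ v ∈ V, Function.Bijective (fderiv ℝ F v))
    (S : Set (Fin n → ℝ)) (hS : IsPreconnected S)
    (hne : (F '' V ∩ S).Nonempty)
    (hfr : F '' (frontier V) ∩ S = ∅) :
    ∀ s ∈ S, ∃! v, v ∈ V ∧ F v = s :=
  existsUnique_preimage_quadratic_general Q L c F hF V hVb hVo hVc hJ S hS hne hfr
end
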